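/- arXiv:2201.07160 — 5 statements merged into one kernel-verified Lean document; each statement's English description precedes it below -/
import Mathlib

section
/- Let p be a prime and G a finite group which is p-constrained, i.e. C_T(O_p(G)) ≤ O_p(G) for some (any) Sylow p-subgroup T of G. Then the quotient G/O_{p'}(G) has characteristic p, meaning that C_{G/O_{p'}(G)}(O_p(G/O_{p'}(G))) ≤ O_p(G/O_{p'}(G)). -/
/-- `P` is the largest normal `p`-subgroup `O_p(G)` of `G`. -/
def IsPCore (p : ℕ) {G : Type*} [Group G] (P : Subgroup G) : Prop :=
  P.Normal ∧ IsPGroup p ↥P ∧ ∀ Q : Subgroup G, Q.Normal → IsPGroup p ↥Q → Q ≤ P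

/-- `N` is the largest normal `p'`-subgroup `O_{p'}(G)` of `G`. -/
def IsPPrimeCore (p : ℕ) {G : Type*} [Group G] (N : Subgroup G) : Prop :=
  N.Normal ∧ (Nat.card ↥N).Coprime p ∧
    ∀ M : Subgroup G, M.Normal → (Nat.card ↥M).Coprime p → M ≤ N

/-!
Write `Ḡ = G/O_{p'}(G)`, `P̄ = O_p(Ḡ)` and `C̄ = C_Ḡ(P̄)`. A Sylow `p`-subgroup `Q` of the
preimage of `P̄` containing `O_p(G)` maps onto `P̄` and meets `O_{p'}(G)` trivially, and the
Frattini argument gives `G = N_G(Q) O_{p'}(G)`; hence centralizers lift: `C̄` is the image of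
`C_G(Q)`. By `p`-constraint every `p`-subgroup of `C_G(Q)` lies in `O_p(G) ≤ Q`, so `C̄ ∩ P̄` is a
central subgroup of `C̄` of index `m` prime to `p`. The transfer `C̄ → C̄ ∩ P̄` is then `c ↦ c ^ m`;
its kernel is a normal `p'`-subgroup of `Ḡ`, hence trivial, so `C̄` embeds into `C̄ ∩ P̄`.
-/

open Subgroup

theorem Subgroup.relIndex_map_dvd {G G' : Type*} [Group G] [Group G'] (f : G →* G')
    (H K : Subgroup G) : (H.map f).relIndex (K.map f) ∣ H.relIndex K := by
  rw [← relIndex_comap]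
  exact relIndex_dvd_of_le_left K (le_comap_map f H)

open scoped IsMulCommutative in
theorem Subgroup.mul_pow_index_of_le_center {G : Type*} [Group G] {Z : Subgroup G}
    [Z.FiniteIndex] (hZ : Z ≤ center G) (a b : G) :
    (a * b) ^ Z.index = a ^ Z.index * b ^ Z.index := by
  have transfer_eq (g : G) : (MonoidHom.transfer (inclusion hZ) g : G) = g ^ Z.index := by
    rw [MonoidHom.transfer_eq_pow _ g fun k g₀ hk => ?_]
    · rfl
    · rw [← mul_right_inj, ← (hZ hk).comm, mul_inv_cancel_right]
  simpa only [coe_mul, transfer_eq] using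
    congrArg Subtype.val (map_mul (MonoidHom.transfer (inclusion hZ)) a b)

theorem natCard_coprime_of_forall_pow_eq_one {H : Type*} [Group H] [Finite H] {m p : ℕ}
    [Fact p.Prime] (hm : m.Coprime p) (h : ∀ x : H, x ^ m = 1) : (Nat.card H).Coprime p := by
  refine ((Nat.Prime.coprime_iff_not_dvd Fact.out).mpr fun hdvd => ?_).symm
  obtain ⟨x, hx⟩ := exists_prime_orderOf_dvd_card' p hdvd
  exact (Nat.Prime.coprime_iff_not_dvd Fact.out).mp hm.symm (hx ▸ orderOf_dvd_of_pow_eq_one (h x))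

theorem isPPrimeCore_bot_quotient {G : Type*} [Group G] [Finite G] {p : ℕ} {N : Subgroup G}
    [N.Normal] (hN : IsPPrimeCore p N) : IsPPrimeCore p (⊥ : Subgroup (G ⧸ N)) := by
  refine ⟨inferInstance, by simp, fun K hK hKp => ?_⟩
  have hcard : Nat.card (K.comap (QuotientGroup.mk' N)) = Nat.card N * Nat.card K :=
    QuotientGroup.card_preimage_mk N K
  have hle : K.comap (QuotientGroup.mk' N) ≤ N :=
    hN.2.2 _ (hK.comap _) (hcard ▸ Nat.Coprime.mul_left hN.2.1 hKp)
  rw [← map_comap_eq_self_of_surjective (QuotientGroup.mk'_surjective N) K]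
  exact (map_mono hle).trans (by simp)

theorem le_of_le_centralizer_of_not_dvd_relIndex {H : Type*} [Group H] [Finite H] {p : ℕ}
    [Fact p.Prime] (hH : IsPPrimeCore p (⊥ : Subgroup H)) {C Z : Subgroup H} [C.Normal]
    (hZ : Z ≤ centralizer C) (hZC : ¬ p ∣ Z.relIndex C) : C ≤ Z := by
  have hcen : Z.subgroupOf C ≤ center C := fun z hz =>
    mem_center_iff.mpr fun c => Subtype.ext (hZ hz c c.2)
  have : (Z.subgroupOf C).Normal :=
    ⟨fun z hz c => by rwa [mem_center_iff.mp (hcen hz) c, mul_inv_cancel_right]⟩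
  let pow : C →* C := MonoidHom.mk' (· ^ Z.relIndex C) (mul_pow_index_of_le_center hcen)
  have mem_ker_pow (c : C) : c ∈ pow.ker ↔ (c : H) ^ Z.relIndex C = 1 := by
    rw [MonoidHom.mem_ker, ← Subtype.val_inj]
    rfl
  let K : Subgroup H := pow.ker.map C.subtype
  have hKnormal : K.Normal := ⟨by
    rintro _ ⟨c, hc, rfl⟩ h
    refine ⟨⟨h * c * h⁻¹, Normal.conj_mem inferInstance _ c.2 h⟩, ?_, rfl⟩
    rw [SetLike.mem_coe, mem_ker_pow, conj_pow, (mem_ker_pow c).mp hc, mul_one, mul_inv_cancel]⟩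
  have hKcard : (Nat.card K).Coprime p :=
    natCard_coprime_of_forall_pow_eq_one ((Nat.Prime.coprime_iff_not_dvd Fact.out).mpr hZC).symm
      fun ⟨_, c, hc, rfl⟩ => Subtype.ext ((mem_ker_pow c).mp hc)
  have hK : K = ⊥ := le_bot_iff.mp (hH.2.2 K hKnormal hKcard)
  have hinj : Function.Injective pow :=
    (MonoidHom.ker_eq_bot_iff _).mp ((map_eq_bot_iff_of_injective _ C.subtype_injective).mp hK)
  intro c hc
  obtain ⟨d, hd⟩ := Finite.injective_iff_surjective.mp hinj ⟨c, hc⟩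
  have hpow : pow d ∈ Z.subgroupOf C := (Z.subgroupOf C).pow_index_mem d
  rwa [hd, mem_subgroupOf] at hpow

theorem Sylow.inf_le_of_inf_le {G : Type*} [Group G] [Finite G] {p : ℕ} [Fact p.Prime]
    {K L : Subgroup G} [K.Normal] [L.Normal] {T : Sylow p G} (h : ↑T ⊓ K ≤ L)
    (T' : Sylow p G) : ↑T' ⊓ K ≤ L := by
  obtain ⟨g, rfl⟩ := MulAction.exists_smul_eq G T T'
  rw [Sylow.coe_subgroup_smul, ← Normal.conj_smul_eq_self g K, ← smul_inf,
    ← Normal.conj_smul_eq_self g L]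
  exact pointwise_smul_le_pointwise_smul_iff.mpr h

section PConstrained

variable {G : Type*} [Group G] {p : ℕ} {P Q : Subgroup G}

theorem le_of_isPGroup_of_le_centralizer (hcon : ∀ T : Sylow p G, ↑T ⊓ centralizer P ≤ P)
    (hQ : IsPGroup p Q) (hPQ : P ≤ Q) {S : Subgroup G} (hS : IsPGroup p S)
    (hSQ : S ≤ centralizer Q) : S ≤ P := by
  obtain ⟨T, hT⟩ :=
    (hS.to_sup_of_normal_right' hQ (hSQ.trans (centralizer_le_normalizer _))).exists_le_sylow
  exact fun s hs => hcon T ⟨hT (le_sup_left (b := Q) hs), centralizer_le hPQ (hSQ hs)⟩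

theorem not_dvd_relIndex_centralizer [Finite G] [Fact p.Prime]
    (hcon : ∀ T : Sylow p G, ↑T ⊓ centralizer P ≤ P) (hQ : IsPGroup p Q) (hPQ : P ≤ Q) :
    ¬ p ∣ Q.relIndex (centralizer Q) := by
  obtain ⟨S⟩ : Nonempty (Sylow p (centralizer (Q : Set G))) := inferInstance
  have hSQ : (S : Subgroup _) ≤ Q.subgroupOf (centralizer Q) := fun s hs =>
    hPQ <| le_of_isPGroup_of_le_centralizer hcon hQ hPQ (S.2.map _) (map_subtype_le _)
      ⟨s, hs, rfl⟩
  exact fun h => S.not_dvd_index (h.trans (index_dvd_of_le hSQ))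

end PConstrained

open scoped commutatorElement in
theorem map_centralizer_eq_of_disjoint {G : Type*} [Group G] {N Q : Subgroup G} [N.Normal]
    (hQN : Disjoint Q N) (hfrat : normalizer Q ⊔ N = ⊤) :
    (centralizer Q).map (QuotientGroup.mk' N) = centralizer (Q.map (QuotientGroup.mk' N)) := by
  refine le_antisymm ?_ fun c hc => ?_
  · rintro _ ⟨g, hg, rfl⟩ _ ⟨q, hq, rfl⟩
    simp only [← map_mul, hg q hq]
  obtain ⟨g, rfl⟩ := QuotientGroup.mk'_surjective N c
  have hg : g ∈ ((normalizer Q ⊔ N : Subgroup G) : Set G) := hfrat ▸ mem_top g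
  rw [mul_normal] at hg
  obtain ⟨m, hm, n, hn, rfl⟩ := hg
  rw [SetLike.mem_coe] at hm hn
  have hmn : QuotientGroup.mk' N (m * n) = QuotientGroup.mk' N m := by
    simp [hn]
  rw [hmn] at hc
  refine ⟨m, fun q hq => ?_, hmn.symm⟩
  have hcomm : ⁅m, q⁆ = 1 := by
    refine disjoint_def.mp hQN (Q.mul_mem ((mem_normalizer_iff.mp hm q).mp hq) (Q.inv_mem hq)) ?_
    rw [← QuotientGroup.eq_one_iff, ← QuotientGroup.mk'_apply, map_commutatorElement,
      commutatorElement_eq_one_iff_mul_comm]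
    exact (hc _ ⟨q, hq, rfl⟩).symm
  exact (commutatorElement_eq_one_iff_mul_comm.mp hcomm).symm

theorem exists_isPGroup_map_eq {G : Type*} [Group G] [Finite G] {p : ℕ} [Fact p.Prime]
    {N : Subgroup G} [N.Normal] {P' : Subgroup (G ⧸ N)} [P'.Normal] (hP' : IsPGroup p P')
    {P : Subgroup G} (hP : IsPGroup p P) (hPP' : P.map (QuotientGroup.mk' N) ≤ P') :
    ∃ Q : Subgroup G, P ≤ Q ∧ IsPGroup p Q ∧ Q.map (QuotientGroup.mk' N) = P' ∧
      normalizer (Q : Set G) ⊔ N = ⊤ := by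
  set R := P'.comap (QuotientGroup.mk' N)
  obtain ⟨Q₀, hPQ₀⟩ := (hP.comap_subtype (K := R)).exists_le_sylow
  set Q := (Q₀ : Subgroup R).map R.subtype
  have hQR : Q.relIndex R = Q₀.index := by
    rw [relIndex, subgroupOf, comap_map_eq_self_of_injective R.subtype_injective]
  -- the index of `Q.map (mk' N)` in `P'` divides both `|P'|` and `[R : Q]`
  have hmap : Q.map (QuotientGroup.mk' N) = P' := by
    refine le_antisymm (map_le_iff_le_comap.mpr (map_subtype_le _)) (relIndex_eq_one.mp ?_)
    obtain ⟨k, hk⟩ := IsPGroup.iff_card.mp hP'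
    have hdvd := relIndex_map_dvd (QuotientGroup.mk' N) Q R
    rw [map_comap_eq_self_of_surjective (QuotientGroup.mk'_surjective N), hQR] at hdvd
    exact Nat.Coprime.eq_one_of_dvd
      (Nat.Coprime.pow_right k ((Nat.Prime.coprime_iff_not_dvd Fact.out).mpr
        (fun h => Q₀.not_dvd_index (h.trans hdvd))).symm) (hk ▸ relIndex_dvd_card _ _)
  refine ⟨Q, fun x hx => ⟨⟨x, hPP' ⟨x, hx, rfl⟩⟩, hPQ₀ hx, rfl⟩, Q₀.2.map _, hmap, ?_⟩
  have hR : Q ⊔ N = P'.comap (QuotientGroup.mk' N) := by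
    rw [← hmap, comap_map_eq, QuotientGroup.ker_mk']
  have hfrat : normalizer (Q : Set G) ⊔ (Q ⊔ N) = ⊤ := by
    rw [hR]
    exact Sylow.normalizer_sup_eq_top Q₀
  rwa [← sup_assoc, sup_of_le_left le_normalizer] at hfrat

/-- If a finite group `G` is `p`-constrained, i.e. `C_T(O_p(G)) ≤ O_p(G)` for a Sylow
`p`-subgroup `T`, then `G/O_{p'}(G)` has characteristic `p`. -/
theorem pConstrained_quotient_pPrimeCore_char_p
    {G : Type*} [Group G] [Finite G] {p : ℕ} [Fact p.Prime]
    (P : Subgroup G) (hP : IsPCore p P)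
    (T : Sylow p G)
    (hcon : (T : Subgroup G) ⊓ Subgroup.centralizer (P : Set G) ≤ P)
    (N : Subgroup G) [N.Normal] (hN : IsPPrimeCore p N)
    (P' : Subgroup (G ⧸ N)) (hP' : IsPCore p P') :
    Subgroup.centralizer (P' : Set (G ⧸ N)) ≤ P' := by
  have : P.Normal := hP.1
  have : P'.Normal := hP'.1
  obtain ⟨Q, hPQ, hQ, hQP', hfrat⟩ := exists_isPGroup_map_eq hP'.2.1 hP.2.1
    (hP'.2.2 _ (hP.1.map _ (QuotientGroup.mk'_surjective N)) (hP.2.1.map _))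
  have hQN : Disjoint Q N := by
    obtain ⟨k, hk⟩ := IsPGroup.iff_card.mp hQ
    exact disjoint_of_coprime_natCard (hk ▸ hN.2.1.symm.pow_left k)
  have hC : (centralizer Q).map (QuotientGroup.mk' N) = centralizer P' := by
    rw [map_centralizer_eq_of_disjoint hQN hfrat, hQP']
  have hindex : ¬ p ∣ (P' ⊓ centralizer P').relIndex (centralizer P') := by
    rw [inf_relIndex_right, ← hC, ← hQP']
    exact fun h => not_dvd_relIndex_centralizer (Sylow.inf_le_of_inf_le hcon) hQ hPQ
      (h.trans (relIndex_map_dvd _ _ _))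
  exact (le_of_le_centralizer_of_not_dvd_relIndex (isPPrimeCore_bot_quotient hN)
    (inf_le_left.trans (le_centralizer_iff.mpr le_rfl)) hindex).trans inf_le_left
end

section
/- Let p be a prime and G a finite group which is p-constrained with P := O_p(G). Then C_G(P) = Z(P) × O_{p'}(G); in particular O_{p'}(C_G(P)) = O_{p'}(G). -/
/-- If a finite group `G` is `p`-constrained with `P = O_p(G)`, then
`C_G(P) = Z(P) × O_{p'}(G)` (an internal direct product); in particular
`O_{p'}(C_G(P)) = O_{p'}(G)`. -/
theorem pConstrained_centralizer_pCore
    {G : Type*} [Group G] [Finite G] {p : ℕ} [Fact p.Prime]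
    (P : Subgroup G) (hP : IsPCore p P)
    (T : Sylow p G)
    (hcon : (T : Subgroup G) ⊓ Subgroup.centralizer (P : Set G) ≤ P)
    (N : Subgroup G) (hN : IsPPrimeCore p N) :
    Subgroup.centralizer (P : Set G) = (P ⊓ Subgroup.centralizer (P : Set G)) ⊔ N ∧
    (P ⊓ Subgroup.centralizer (P : Set G)) ⊓ N = ⊥ ∧
    (∀ z ∈ P ⊓ Subgroup.centralizer (P : Set G), ∀ n ∈ N, z * n = n * z) ∧
    (∀ K : Subgroup ↥(Subgroup.centralizer (P : Set G)), IsPPrimeCore p K →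
      K.map (Subgroup.centralizer (P : Set G)).subtype = N) := by
  obtain ⟨hPn, hPp, hPmax⟩ := hP
  obtain ⟨hNn, hNcop, hNmax⟩ := hN
  have hp : p.Prime := Fact.out
  set C := Subgroup.centralizer (P : Set G) with hCdef
  set Z := P ⊓ C with hZdef
  -- `C` is normal in `G`
  have hCn : C.Normal := by
    constructor
    intro n hn g
    rw [Subgroup.mem_centralizer_iff] at hn ⊢
    intro h hh
    have hh' : g⁻¹ * h * g ∈ P := by
      have := hPn.conj_mem h hh g⁻¹
      simpa [mul_assoc] using this
    have key := hn _ hh'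
    calc h * (g * n * g⁻¹) = g * ((g⁻¹ * h * g) * n) * g⁻¹ := by group
      _ = g * (n * (g⁻¹ * h * g)) * g⁻¹ := by rw [key]
      _ = (g * n * g⁻¹) * h := by group
  -- `P ⊓ N = ⊥`
  have hPN : P ⊓ N = ⊥ := by
    obtain ⟨k, hk⟩ := (IsPGroup.iff_card (p := p)).mp (hPp.to_inf_left (K := N))
    have hdvd : Nat.card ↥(P ⊓ N) ∣ Nat.card N := Subgroup.card_dvd_of_le inf_le_right
    have hcop' : (Nat.card ↥(P ⊓ N)).Coprime p := Nat.Coprime.coprime_dvd_left hdvd hNcop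
    rw [hk] at hcop'
    rcases Nat.eq_zero_or_pos k with rfl | hkpos
    · rw [pow_zero] at hk
      exact Subgroup.card_eq_one.mp hk
    · exact absurd (dvd_pow_self p hkpos.ne')
        ((hp.coprime_iff_not_dvd).mp hcop'.symm)
  -- `N ≤ C`
  have hNC : N ≤ C := by
    intro n hn
    rw [Subgroup.mem_centralizer_iff]
    intro h hh
    exact Subgroup.commute_of_normal_of_disjoint P N hPn hNn
      (Subgroup.disjoint_def.mpr (fun {x} hxP hxN => by
        have : x ∈ P ⊓ N := ⟨hxP, hxN⟩
        rwa [hPN, Subgroup.mem_bot] at this)) h n hh hn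
  -- elements of `Z` are central in `C`
  have hZcent : ∀ z ∈ Z, ∀ c ∈ C, z * c = c * z := by
    intro z hz c hc
    exact Subgroup.mem_centralizer_iff.mp hc z hz.1
  have hZleC : Z ≤ C := inf_le_right
  -- Part 3
  have part3 : ∀ z ∈ Z, ∀ n ∈ N, z * n = n * z := by
    intro z hz n hn
    exact hZcent z hz n (hNC hn)
  -- elements of `Z` (and of `P`) have `p`-power order
  have hordP : ∀ z : G, z ∈ P → ∃ m, orderOf z = p ^ m := by
    intro z hz
    obtain ⟨k, hk⟩ := hPp ⟨z, hz⟩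
    have hk' : z ^ p ^ k = 1 := by
      have := congrArg (Subgroup.subtype P) hk
      simpa using this
    obtain ⟨m, -, hm⟩ := (Nat.dvd_prime_pow hp).mp (orderOf_dvd_of_pow_eq_one hk')
    exact ⟨m, hm⟩
  -- work inside `C`
  set Z₀ := Z.subgroupOf C with hZ0def
  have hZ0n : Z₀.Normal := by
    constructor
    intro n hn g
    rw [Subgroup.mem_subgroupOf] at hn ⊢
    have : ((g * n * g⁻¹ : C) : G) = (n : G) := by
      push_cast
      have := hZcent (n : G) hn (g : G) g.2
      rw [← this, mul_assoc, mul_inv_cancel, mul_one]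
    rwa [this]
  have hZ0p : IsPGroup p ↥Z₀ :=
    (hPp.to_inf_left (K := C)).of_equiv (Subgroup.subgroupOfEquivOfLe hZleC).symm
  -- the index of `Z₀` in `C` is coprime to `p`
  have hZ0index : (Z₀.index).Coprime p := by
    obtain ⟨S⟩ : Nonempty (Sylow p ↥C) := inferInstance
    have hSle : (S : Subgroup ↥C).map C.subtype ≤ Z := by
      obtain ⟨T', hT'⟩ := (S.2.map C.subtype).exists_le_sylow
      obtain ⟨g, hg⟩ := MulAction.exists_smul_eq G T' T
      intro x hx
      have hxC : x ∈ C := by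
        rcases hx with ⟨y, _, rfl⟩
        exact y.2
      have hxT' : x ∈ (T' : Subgroup G) := hT' hx
      have hxT : g * x * g⁻¹ ∈ (T : Subgroup G) := by
        rw [← hg, Sylow.smul_def, Sylow.pointwise_smul_def]
        exact Subgroup.smul_mem_pointwise_smul x (MulAut.conj g) _ hxT'
      have hxCconj : g * x * g⁻¹ ∈ C := hCn.conj_mem x hxC g
      have hxPconj : g * x * g⁻¹ ∈ P := hcon ⟨hxT, hxCconj⟩
      have hxP : x ∈ P := by
        have := hPn.conj_mem _ hxPconj g⁻¹
        simpa [mul_assoc] using this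
      exact ⟨hxP, hxC⟩
    have hSZ0 : (S : Subgroup ↥C) ≤ Z₀ := by
      intro x hx
      rw [Subgroup.mem_subgroupOf]
      exact hSle ⟨x, hx, rfl⟩
    have hdvd : Z₀.index ∣ (S : Subgroup ↥C).index := Subgroup.index_dvd_of_le hSZ0
    have hnd : ¬ p ∣ (S : Subgroup ↥C).index := S.not_dvd_index
    exact (hp.coprime_iff_not_dvd.mpr (fun h => hnd (h.trans hdvd))).symm
  -- Schur–Zassenhaus complement of `Z₀` in `C`
  haveI : Z₀.Normal := hZ0n
  obtain ⟨kc, hkc⟩ := (IsPGroup.iff_card (p := p)).mp hZ0p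
  obtain ⟨H, hH⟩ := Subgroup.exists_right_complement'_of_coprime
    (N := Z₀) (by rw [hkc]; exact (hZ0index.symm).pow_left kc)
  set Hm := H.map C.subtype with hHmdef
  have hHcard : (Nat.card ↥H).Coprime p := by
    have : Nat.card ↥H = Z₀.index := (hH.symm.index_eq_card).symm
    rw [this]; exact hZ0index
  have hHmcard : (Nat.card ↥Hm).Coprime p := by
    have : Nat.card ↥Hm = Nat.card ↥H :=
      (Nat.card_congr (Subgroup.equivMapOfInjective H C.subtype
        (Subgroup.subtype_injective C)).toEquiv).symm
    rw [this]; exact hHcard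
  -- forward characterization: elements of `Hm` are `p'`-elements of `C`
  have hfwd : ∀ x : G, x ∈ Hm → x ∈ C ∧ (orderOf x).Coprime p := by
    rintro x ⟨y, hy, rfl⟩
    refine ⟨y.2, ?_⟩
    have h1 : orderOf (C.subtype y) = orderOf y :=
      orderOf_injective C.subtype (Subgroup.subtype_injective C) y
    have h2 : orderOf y ∣ Nat.card ↥H := Subgroup.orderOf_dvd_natCard H hy
    exact Nat.Coprime.coprime_dvd_left (h1 ▸ h2) hHcard
  -- backward characterization
  have hmemHm : ∀ x : G, x ∈ Hm ↔ x ∈ C ∧ (orderOf x).Coprime p := by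
    intro x
    refine ⟨hfwd x, ?_⟩
    rintro ⟨hxC, hxord⟩
    obtain ⟨⟨z, h⟩, hzh, -⟩ := hH.existsUnique (⟨x, hxC⟩ : C)
    have hx_eq : x = (↑(z : C) : G) * (↑(h : C) : G) := by
      have := congrArg (fun c : C => (c : G)) hzh
      simpa using this.symm
    have hzZ : ((z : C) : G) ∈ Z := z.2
    have hhHm : ((h : C) : G) ∈ Hm := ⟨(h : C), h.2, rfl⟩
    have hcomm : Commute ((z : C) : G) ((h : C) : G) :=
      hZcent _ hzZ _ (h : C).2
    obtain ⟨m, hm⟩ := hordP _ hzZ.1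
    have hhord : (orderOf ((h : C) : G)).Coprime p := (hfwd _ hhHm).2
    have hcop : (orderOf ((z : C) : G)).Coprime (orderOf ((h : C) : G)) := by
      rw [hm]; exact (hhord.symm).pow_left m
    have horder : orderOf x = orderOf ((z : C) : G) * orderOf ((h : C) : G) := by
      rw [hx_eq]; exact hcomm.orderOf_mul_eq_mul_orderOf_of_coprime hcop
    have hzord : (orderOf ((z : C) : G)).Coprime p :=
      Nat.Coprime.coprime_dvd_left ⟨orderOf ((h : C) : G), horder⟩ hxord
    have hz1 : ((z : C) : G) = 1 := by
      rw [hm] at hzord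
      rcases Nat.eq_zero_or_pos m with rfl | hmpos
      · rw [pow_zero] at hm
        exact orderOf_eq_one_iff.mp hm
      · exact absurd (dvd_pow_self p hmpos.ne')
          (hp.coprime_iff_not_dvd.mp hzord.symm)
    rw [hx_eq, hz1, one_mul]
    exact hhHm
  -- `Hm` is normal in `G`
  have hHmn : Hm.Normal := by
    constructor
    intro n hn g
    rw [hmemHm] at hn ⊢
    refine ⟨hCn.conj_mem n hn.1 g, ?_⟩
    have : orderOf (g * n * g⁻¹) = orderOf n := by
      have := orderOf_injective (MulAut.conj g).toMonoidHom (MulAut.conj g).injective n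
      simpa using this
    rw [this]; exact hn.2
  have hHmN : Hm ≤ N := hNmax Hm hHmn hHmcard
  -- Part 1
  have hZ0map : Z₀.map C.subtype = Z := by
    rw [hZ0def, Subgroup.subgroupOf_map_subtype, inf_eq_left.mpr hZleC]
  have part1 : C = Z ⊔ N := by
    refine le_antisymm ?_ (sup_le hZleC hNC)
    have htop : Z₀ ⊔ H = ⊤ := hH.sup_eq_top
    have hCeq : C = Z ⊔ Hm := by
      have : (Z₀ ⊔ H).map C.subtype = Z ⊔ Hm := by
        rw [Subgroup.map_sup, hZ0map]
      rw [← this, htop, ← MonoidHom.range_eq_map, Subgroup.range_subtype]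
    rw [hCeq]
    exact sup_le_sup_left hHmN Z
  -- Part 2
  have part2 : Z ⊓ N = ⊥ := by
    rw [eq_bot_iff, ← hPN]
    exact inf_le_inf_right N inf_le_left
  refine ⟨part1, part2, part3, ?_⟩
  -- Part 4
  intro K hK
  obtain ⟨hKn, hKcard, hKmax⟩ := hK
  refine le_antisymm ?_ ?_
  · -- `K.map C.subtype ≤ Hm ≤ N`
    refine le_trans ?_ hHmN
    rintro x ⟨y, hy, rfl⟩
    rw [hmemHm]
    refine ⟨y.2, ?_⟩
    have h1 : orderOf (C.subtype y) = orderOf y :=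
      orderOf_injective C.subtype (Subgroup.subtype_injective C) y
    have h2 : orderOf y ∣ Nat.card ↥K := Subgroup.orderOf_dvd_natCard K hy
    exact Nat.Coprime.coprime_dvd_left (h1 ▸ h2) hKcard
  · -- `N ≤ K.map C.subtype`
    have hN0card : (Nat.card ↥(N.subgroupOf C)).Coprime p := by
      have : Nat.card ↥(N.subgroupOf C) = Nat.card ↥N :=
        Nat.card_congr (Subgroup.subgroupOfEquivOfLe hNC).toEquiv
      rw [this]; exact hNcop
    have hN0K : N.subgroupOf C ≤ K :=
      hKmax _ (hNn.subgroupOf C) hN0card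
    intro n hn
    exact ⟨⟨n, hNC hn⟩, hN0K (by rwa [Subgroup.mem_subgroupOf]), rfl⟩
end

section
/- Let p be a prime and G a finite group such that G/O_{p'}(G) has characteristic p (i.e. the centralizer of O_p(G/O_{p'}(G)) in G/O_{p'}(G) is contained in O_p(G/O_{p'}(G))). Then for every p-subgroup Q of G one has O_{p'}(N_G(Q)) = O_{p'}(G) ∩ N_G(Q) = O_{p'}(G) ∩ C_G(Q). -/
/-!
The second equality holds because `[N ∩ N_G(Q), Q] ≤ N ∩ Q = 1`. The same argument shows that
`K = O_{p'}(N_G(Q))` centralizes `Q`, and `N ∩ N_G(Q) ≤ K` by maximality of `K`.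

For `K ≤ N`, pass to `Ḡ = G ⧸ N`, with `R` and `X` the images of `Q` and `K`. By the Frattini
argument (`Q` is a Sylow subgroup of `QN`) the normalizer of `R` is the image of `N_G(Q)`, so
`C_Ḡ(R)` normalizes the `p'`-group `X`; hence `O_p(Ḡ) ∩ C_Ḡ(R)` centralizes `X`. Thompson's
`P × Q`-lemma then gives `X ≤ C_Ḡ(O_p(Ḡ)) ≤ O_p(Ḡ)`, so `X = 1`.
-/

open Subgroup
open scoped commutatorElement

section Elementary

variable {G : Type*} [Group G]

theorem IsPGroup.disjoint_of_coprime_natCard {p : ℕ} {A B : Subgroup G} (hA : IsPGroup p A)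
    (hB : (Nat.card B).Coprime p) : Disjoint A B :=
  hA.disjoint_of_coprime IsPGroup.card hB.symm

theorem commute_of_mem_normalizer_of_disjoint {A B : Subgroup G} {x y : G} (hx : x ∈ A)
    (hy : y ∈ B) (hxB : x ∈ normalizer (B : Set G)) (hyA : y ∈ normalizer (A : Set G))
    (hAB : Disjoint A B) : Commute x y := by
  have hA : ⁅x, y⁆ ∈ A := by
    rw [commutatorElement_def, mul_assoc, mul_assoc, ← mul_assoc y]
    exact mul_mem hx ((mem_normalizer_iff.mp hyA x⁻¹).mp (inv_mem hx))
  have hB : ⁅x, y⁆ ∈ B := by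
    rw [commutatorElement_def]
    exact mul_mem ((mem_normalizer_iff.mp hxB y).mp hy) (inv_mem hy)
  exact commutatorElement_eq_one_iff_commute.mp (disjoint_def.mp hAB hA hB)

theorem conj_pow_eq_commutatorElement_pow_mul {c x : G} (h : Commute ⁅c, x⁆ c) (k : ℕ) :
    c ^ k * x * (c ^ k)⁻¹ = ⁅c, x⁆ ^ k * x := by
  induction k with
  | zero => simp
  | succ k ih =>
    calc c ^ (k + 1) * x * (c ^ (k + 1))⁻¹ = c * (c ^ k * x * (c ^ k)⁻¹) * c⁻¹ := by group
      _ = ⁅c, x⁆ ^ k * (c * x * c⁻¹) := by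
        rw [ih, ← mul_assoc, ← (h.pow_left k).eq]; group
      _ = ⁅c, x⁆ ^ (k + 1) * x := by rw [pow_succ, commutatorElement_def]; group

theorem commute_of_commute_commutatorElement {c x : G} {n : ℕ} (h : Commute ⁅c, x⁆ c)
    (hn : ⁅c, x⁆ ^ n = 1) (hco : n.Coprime (orderOf c)) : Commute c x := by
  have hcn : Commute (c ^ n) x := by
    have := conj_pow_eq_commutatorElement_pow_mul h n
    rw [hn, one_mul, mul_inv_eq_iff_eq_mul] at this
    exact this
  obtain ⟨m, hm⟩ := exists_pow_eq_self_of_coprime hco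
  exact hm ▸ hcn.pow_left m

theorem normalizer_inf_normalizer_le_normalizer_commutator (H K : Subgroup G) :
    normalizer (H : Set G) ⊓ normalizer (K : Set G) ≤
      normalizer ((⁅H, K⁆ : Subgroup G) : Set G) := by
  intro g hg
  obtain ⟨hH, hK⟩ := mem_inf.mp hg
  rw [mem_normalizer_iff_map_conj_eq] at hH hK ⊢
  rw [map_commutator, hH, hK]

theorem exists_iterate_commutator_eq_bot {H P B : Subgroup G} (hH : Group.IsNilpotent H)
    (hP : P ≤ H) (hB : B ≤ H) : ∃ n, (fun X ↦ ⁅X, B⁆)^[n] P = ⊥ := by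
  obtain ⟨n, hn⟩ := (isNilpotent_iff_lowerCentralSeries H).mp hH
  have key : ∀ k, (fun X ↦ ⁅X, B⁆)^[k] P ≤ H.lowerCentralSeries k := by
    intro k
    induction k with
    | zero => exact hP
    | succ k ih =>
      rw [Function.iterate_succ_apply']
      exact commutator_mono ih hB
  exact ⟨n, le_bot_iff.mp (hn ▸ key n)⟩

end Elementary

section Thompson

variable {G : Type*} [Group G] {p : ℕ} {P B C : Subgroup G}

theorem le_centralizer_of_commutator_le_centralizer (hP : IsPGroup p P)
    (hC : (Nat.card C).Coprime p) (hCP : C ≤ normalizer (P : Set G))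
    (h : ⁅C, P⁆ ≤ centralizer (C : Set G)) : C ≤ centralizer (P : Set G) := by
  intro c hc
  rw [mem_centralizer_iff]
  intro x hx
  have hm : ⁅c, x⁆ ∈ ⁅C, P⁆ := commutator_mem_commutator hc hx
  obtain ⟨k, hk⟩ := hP ⟨⁅c, x⁆, le_normalizer_iff_commutator_le_right.mp hCP hm⟩
  have hco : (p ^ k).Coprime (orderOf c) :=
    (Nat.Coprime.coprime_dvd_left (orderOf_dvd_natCard C hc) hC).symm.pow_left k
  exact (commute_of_commute_commutatorElement (mem_centralizer_iff.mp (h hm) c hc).symm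
    (by simpa using congrArg Subtype.val hk) hco).symm.eq

/-- Induction along `P ≥ [P, B] ≥ [P, B, B] ≥ ⋯`: once `C` centralizes `[P, B]`, the three
subgroups lemma puts `[C, P]` into `P ∩ C_G(B) ≤ C_G(C)`. -/
theorem le_centralizer_of_iterate_commutator_eq_bot (hC : (Nat.card C).Coprime p)
    (hCB : C ≤ centralizer (B : Set G)) (n : ℕ) :
    ∀ P : Subgroup G, IsPGroup p P → B ≤ normalizer (P : Set G) →
      C ≤ normalizer (P : Set G) → P ⊓ centralizer (B : Set G) ≤ centralizer (C : Set G) →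
      (fun X ↦ ⁅X, B⁆)^[n] P = ⊥ → C ≤ centralizer (P : Set G) := by
  induction n with
  | zero =>
    rintro P - - - - rfl
    exact le_centralizer_iff.mp bot_le
  | succ n ih =>
    intro P hP hBP hCP key hn
    have hPB : ⁅P, B⁆ ≤ P := le_normalizer_iff_commutator_le_left.mp hBP
    have hC_PB : C ≤ centralizer ((⁅P, B⁆ : Subgroup G) : Set G) :=
      ih ⁅P, B⁆ (hP.to_le hPB)
        (fun b hb ↦ normalizer_inf_normalizer_le_normalizer_commutator P B
          (mem_inf.mpr ⟨hBP hb, le_normalizer hb⟩))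
        (fun c hc ↦ normalizer_inf_normalizer_le_normalizer_commutator P B
          (mem_inf.mpr ⟨hCP hc, centralizer_le_normalizer _ (hCB hc)⟩))
        ((inf_le_inf_right _ hPB).trans key) hn
    have three_subgroups : ⁅⁅C, P⁆, B⁆ = ⊥ :=
      commutator_commutator_eq_bot_of_rotate
        (commutator_eq_bot_iff_le_centralizer.mpr (le_centralizer_iff.mp hC_PB))
        (by rw [commutator_eq_bot_iff_le_centralizer.mpr (le_centralizer_iff.mp hCB),
          commutator_bot_left])
    exact le_centralizer_of_commutator_le_centralizer hP hC hCP
      (le_trans (le_inf (le_normalizer_iff_commutator_le_right.mp hCP)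
        (commutator_eq_bot_iff_le_centralizer.mp three_subgroups)) key)

/-- Thompson's `P × Q`-lemma. -/
theorem le_centralizer_of_inf_centralizer_le_centralizer [Finite G] [Fact p.Prime]
    (hP : IsPGroup p P) (hB : IsPGroup p B) (hC : (Nat.card C).Coprime p)
    (hCB : C ≤ centralizer (B : Set G)) (hBP : B ≤ normalizer (P : Set G))
    (hCP : C ≤ normalizer (P : Set G))
    (key : P ⊓ centralizer (B : Set G) ≤ centralizer (C : Set G)) :
    C ≤ centralizer (P : Set G) := by
  obtain ⟨n, hn⟩ := exists_iterate_commutator_eq_bot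
    (hB.to_sup_of_normal_right' hP hBP).isNilpotent le_sup_right le_sup_left
  exact le_centralizer_of_iterate_commutator_eq_bot hC hCB n P hP hBP hCP key hn

end Thompson

section Frattini

open scoped Pointwise

variable {G : Type*} [Group G] {p : ℕ} {Q N : Subgroup G} [N.Normal]

theorem card_sup_eq_card_mul_card_of_disjoint [Finite G] (h : Disjoint Q N) :
    Nat.card ↥(Q ⊔ N) = Nat.card Q * Nat.card N := by
  have h₁ := relIndex_mul_relIndex ⊥ N (Q ⊔ N) bot_le le_sup_right
  rw [relIndex_bot_left, relIndex_bot_left, relIndex_sup_right, ← inf_relIndex_right,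
    h.symm.eq_bot, relIndex_bot_left] at h₁
  rw [← h₁, mul_comm]

variable [Finite G] [Fact p.Prime]

/-- Frattini argument for the Sylow `p`-subgroup `Q` of `Q ⊔ N`. -/
theorem normalizer_sup_le_normalizer_sup (hQ : IsPGroup p Q) (hN : (Nat.card N).Coprime p) :
    normalizer ((Q ⊔ N : Subgroup G) : Set G) ≤ normalizer (Q : Set G) ⊔ N := by
  intro g hg
  set J := Q ⊔ N
  have hJ := card_sup_eq_card_mul_card_of_disjoint (hQ.disjoint_of_coprime_natCard hN)
  have not_dvd_index : ∀ Q' : Subgroup G, Q' ≤ J → Nat.card Q' = Nat.card Q →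
      ¬ p ∣ (Q'.subgroupOf J).index := by
    intro Q' hQ' hcard
    have h := relIndex_mul_relIndex ⊥ Q' J bot_le hQ'
    rw [relIndex_bot_left, relIndex_bot_left, hcard, hJ] at h
    change ¬ p ∣ Q'.relIndex J
    rw [Nat.eq_of_mul_eq_mul_left Nat.card_pos h]
    exact (Nat.Prime.coprime_iff_not_dvd Fact.out).mp hN.symm
  set Q₁ := MulAut.conj g • Q
  have hQ₁J : Q₁ ≤ J := by
    have : MulAut.conj g • J = J := mem_normalizer_iff_map_conj_eq.mp hg
    exact this ▸ pointwise_smul_le_pointwise_smul_iff.mpr le_sup_left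
  have hQ₁ : Nat.card Q₁ = Nat.card Q := Nat.card_congr (equivSMul _ Q).toEquiv.symm
  let S : Sylow p J := (hQ.comap_subtype (K := J)).toSylow (not_dvd_index Q le_sup_left rfl)
  let S₁ : Sylow p J :=
    ((hQ.map _).comap_subtype (K := J)).toSylow (not_dvd_index Q₁ hQ₁J hQ₁)
  obtain ⟨j, hj⟩ := MulAction.exists_smul_eq J S S₁
  have hjQ : MulAut.conj (j : G) • Q = Q₁ := by
    have h := congrArg (fun S : Sylow p J ↦ (S : Subgroup J)) hj
    change MulAut.conj j • Q.subgroupOf J = Q₁.subgroupOf J at h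
    rw [conj_smul_subgroupOf le_sup_left] at h
    rwa [subgroupOf_inj, inf_of_le_left (conj_smul_le_of_le le_sup_left j),
      inf_of_le_left hQ₁J] at h
  have hjg : (j : G)⁻¹ * g ∈ normalizer (Q : Set G) := by
    refine mem_normalizer_iff_map_conj_eq.mpr ?_
    change MulAut.conj ((j : G)⁻¹ * g) • Q = Q
    rw [map_mul, mul_smul]
    change _ • Q₁ = Q
    rw [← hjQ, ← mul_smul, ← map_mul, inv_mul_cancel, map_one, one_smul]
  rw [← mul_inv_cancel_left (j : G) g]
  exact mul_mem (sup_le_sup_right le_normalizer N j.2) (mem_sup_left hjg)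

theorem map_normalizer_eq_normalizer_map (hQ : IsPGroup p Q) (hN : (Nat.card N).Coprime p) :
    (normalizer (Q : Set G)).map (QuotientGroup.mk' N) =
      normalizer ((Q.map (QuotientGroup.mk' N) : Subgroup (G ⧸ N)) : Set (G ⧸ N)) := by
  set π := QuotientGroup.mk' N
  have hπ : Function.Surjective π := QuotientGroup.mk'_surjective N
  refine le_antisymm (le_normalizer_map π) ?_
  calc normalizer ((Q.map π : Subgroup (G ⧸ N)) : Set (G ⧸ N))
      = (normalizer ((Q ⊔ N : Subgroup G) : Set G)).map π := by
        rw [show Q ⊔ N = (Q.map π).comap π by rw [comap_map_eq, QuotientGroup.ker_mk'],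
          ← comap_normalizer_eq_of_surjective _ hπ, map_comap_eq_self_of_surjective hπ]
    _ ≤ (normalizer (Q : Set G) ⊔ N).map π := map_mono (normalizer_sup_le_normalizer_sup hQ hN)
    _ = (normalizer (Q : Set G)).map π := by
        rw [Subgroup.map_sup, (map_eq_bot_iff N).mpr (QuotientGroup.ker_mk' N).ge, sup_bot_eq]

end Frattini

theorem exists_isPCore (G : Type*) [Group G] [Finite G] (p : ℕ) [Fact p.Prime] :
    ∃ P : Subgroup G, IsPCore p P := by
  obtain ⟨S⟩ : Nonempty (Sylow p G) := inferInstance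
  exact ⟨S.normalCore, normalCore_normal _, S.isPGroup'.to_le (normalCore_le _),
    fun Q _ hQ ↦ normal_le_normalCore.mpr (hQ.le_sylow_of_normal S)⟩

theorem eq_bot_of_centralizer_le_normalizer {Γ : Type*} [Group Γ] [Finite Γ] {p : ℕ}
    [Fact p.Prime] {P R X : Subgroup Γ} (hPn : P.Normal) (hP : IsPGroup p P)
    (hCP : centralizer (P : Set Γ) ≤ P) (hR : IsPGroup p R) (hX : (Nat.card X).Coprime p)
    (hXR : X ≤ centralizer (R : Set Γ))
    (hRX : centralizer (R : Set Γ) ≤ normalizer (X : Set Γ)) :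
    X = ⊥ := by
  have hPX : Disjoint P X := hP.disjoint_of_coprime_natCard hX
  have hP_top : normalizer (P : Set Γ) = ⊤ := normalizer_eq_top P
  have key : P ⊓ centralizer (R : Set Γ) ≤ centralizer (X : Set Γ) := by
    intro h hh
    obtain ⟨hhP, hhR⟩ := mem_inf.mp hh
    exact mem_centralizer_iff.mpr fun x hx ↦
      (commute_of_mem_normalizer_of_disjoint hhP hx (hRX hhR) (hP_top ▸ mem_top x) hPX).symm.eq
  have hXP : X ≤ P := (le_centralizer_of_inf_centralizer_le_centralizer hP hR hX hXR
    (hP_top ▸ le_top) (hP_top ▸ le_top) key).trans hCP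
  exact hPX.eq_bot_of_ge hXP

section Normalizer

variable {G : Type*} [Group G]

theorem inf_normalizer_le_centralizer {p : ℕ} {M Q : Subgroup G} (hQ : IsPGroup p Q)
    (hM : (Nat.card M).Coprime p) (hQM : Q ≤ normalizer (M : Set G)) :
    M ⊓ normalizer (Q : Set G) ≤ centralizer (Q : Set G) := by
  intro x hx
  obtain ⟨hxM, hxQ⟩ := mem_inf.mp hx
  exact mem_centralizer_iff.mpr fun q hq ↦ (commute_of_mem_normalizer_of_disjoint hxM hq hxQ
    (hQM hq) (hQ.disjoint_of_coprime_natCard hM).symm).symm.eq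

theorem le_normalizer_map_subtype {H : Subgroup G} (K : Subgroup H) [K.Normal] :
    H ≤ normalizer ((K.map H.subtype : Subgroup G) : Set G) := by
  have : (K.map H.subtype).subgroupOf H = K := comap_map_eq_self_of_injective H.subtype_injective K
  exact (normal_subgroupOf_iff_le_normalizer (map_subtype_le K)).mp (by rw [this]; infer_instance)

theorem le_of_le_centralizer_of_normalizer_le_normalizer [Finite G] {p : ℕ} [Fact p.Prime]
    {N : Subgroup G} [N.Normal] (hN : (Nat.card N).Coprime p)
    (hchar : ∀ P : Subgroup (G ⧸ N), IsPCore p P → centralizer (P : Set (G ⧸ N)) ≤ P)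
    {Q M : Subgroup G} (hQ : IsPGroup p Q) (hM : (Nat.card M).Coprime p)
    (hMQ : M ≤ centralizer (Q : Set G))
    (hQM : normalizer (Q : Set G) ≤ normalizer (M : Set G)) :
    M ≤ N := by
  obtain ⟨P, hP⟩ := exists_isPCore (G ⧸ N) p
  set π := QuotientGroup.mk' N
  rw [← QuotientGroup.ker_mk' N, ← Subgroup.map_eq_bot_iff]
  refine eq_bot_of_centralizer_le_normalizer hP.1 hP.2.1 (hchar P hP) (hQ.map π)
    (hM.coprime_dvd_left (card_map_dvd M π)) ?_ ?_
  · rw [coe_map]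
    exact (map_mono hMQ).trans (map_centralizer_le_centralizer_image _ π)
  · calc centralizer ((Q.map π : Subgroup (G ⧸ N)) : Set (G ⧸ N))
        ≤ normalizer ((Q.map π : Subgroup (G ⧸ N)) : Set (G ⧸ N)) :=
          centralizer_le_normalizer _
      _ = (normalizer (Q : Set G)).map π := (map_normalizer_eq_normalizer_map hQ hN).symm
      _ ≤ (normalizer (M : Set G)).map π := map_mono hQM
      _ ≤ normalizer ((M.map π : Subgroup (G ⧸ N)) : Set (G ⧸ N)) := le_normalizer_map π

end Normalizer

/-- If `G/O_{p'}(G)` has characteristic `p`, then for every `p`-subgroup `Q` of `G`,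
`O_{p'}(N_G(Q)) = O_{p'}(G) ∩ N_G(Q) = O_{p'}(G) ∩ C_G(Q)`. -/
theorem pPrimeCore_normalizer_of_quotient_char_p
    {G : Type*} [Group G] [Finite G] {p : ℕ} [Fact p.Prime]
    (N : Subgroup G) [N.Normal] (hN : IsPPrimeCore p N)
    (hchar : ∀ P' : Subgroup (G ⧸ N), IsPCore p P' →
      Subgroup.centralizer (P' : Set (G ⧸ N)) ≤ P')
    (Q : Subgroup G) (hQ : IsPGroup p ↥Q) :
    (∀ K : Subgroup ↥(Subgroup.normalizer (Q : Set G)), IsPPrimeCore p K →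
      K.map (Subgroup.normalizer (Q : Set G)).subtype = N ⊓ (Subgroup.normalizer (Q : Set G))) ∧
    N ⊓ (Subgroup.normalizer (Q : Set G)) = N ⊓ Subgroup.centralizer (Q : Set G) := by
  obtain ⟨-, hNco, -⟩ := hN
  have hNQ : N ⊓ normalizer (Q : Set G) ≤ centralizer (Q : Set G) :=
    inf_normalizer_le_centralizer hQ hNco (normalizer_eq_top N ▸ le_top)
  refine ⟨fun K hK ↦ le_antisymm ?_ ?_,
    le_antisymm (le_inf inf_le_left hNQ) (inf_le_inf_left N (centralizer_le_normalizer _))⟩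
  · obtain ⟨hKn, hKco, -⟩ := hK
    have hK'co : (Nat.card (K.map (normalizer (Q : Set G)).subtype)).Coprime p := by
      rwa [card_map_of_injective (subtype_injective _)]
    have hQK : normalizer (Q : Set G) ≤ normalizer (K.map (normalizer (Q : Set G)).subtype) :=
      le_normalizer_map_subtype K
    have hKQ : K.map (normalizer (Q : Set G)).subtype ≤ centralizer (Q : Set G) :=
      (le_inf le_rfl (map_subtype_le K)).trans
        (inf_normalizer_le_centralizer hQ hK'co (le_normalizer.trans hQK))
    exact le_inf (le_of_le_centralizer_of_normalizer_le_normalizer hNco hchar hQ hK'co hKQ hQK)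
      (map_subtype_le K)
  · rw [← subgroupOf_map_subtype]
    exact map_mono (hK.2.2 _ normal_subgroupOf
      (hNco.coprime_dvd_left (card_comap_dvd_of_injective N _ (subtype_injective _))))
end

section
/- Let p be a prime, M a finite group with Sylow p-subgroup S such that S is nonabelian of order p^3, Z(S) is normal in M, and C_M(V) ≤ V for every subgroup V of S of order at least p^2. Then O_{p'}(M) = 1. -/
/-!
Let `N` be a nontrivial normal subgroup of order prime to `p`. Since `Z(S)` and `N` are normal
and intersect trivially, `Z(S)` centralizes `N`. By a fixed point argument `S` normalizes some
Sylow subgroup of `N`, hence also its center `W`, a nontrivial abelian group on which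
`E = S / Z(S)` acts. If `s ∈ S \ Z(S)` fixes `w ∈ W`, then `C_S(w)` contains `⟨Z(S), s⟩`, so it
has order at least `p²` and `w ∈ C_M(C_S(w)) ≤ S ∩ N = 1`: every nonidentity element of `E`
acts fixed point freely. But `E` is elementary abelian of order `p²`, and for such an action the
norms over the `p + 1` subgroups of order `p` multiply to `w ^ p` times the norm over `E`; all
these norms are fixed points, so `w ^ p = 1`, which forces `w = 1` as `p` does not divide `|N|`.
-/

open Subgroup

namespace ZMod

variable {E : Type*} [Monoid E] {n : ℕ} {e : E}

lemma pow_val_add [NeZero n] (he : e ^ n = 1) (i j : ZMod n) :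
    e ^ (i + j).val = e ^ (i.val + j.val) := by
  rw [ZMod.val_add, ← pow_eq_pow_mod _ he]

lemma pow_val_mul (he : e ^ n = 1) (i j : ZMod n) : e ^ (i * j).val = e ^ (i.val * j.val) := by
  rw [ZMod.val_mul, ← pow_eq_pow_mod _ he]

end ZMod

section FixedPointFree

variable {E W : Type*} [Group E] [CommGroup W]

def powNorm (ρ : E →* MulAut W) (p : ℕ) [NeZero p] (e : E) (w : W) : W :=
  ∏ k : ZMod p, ρ (e ^ k.val) w

variable {ρ : E →* MulAut W} {p : ℕ} [Fact p.Prime]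

lemma apply_powNorm {e : E} (he : e ^ p = 1) (w : W) :
    ρ e (powNorm ρ p e w) = powNorm ρ p e w := by
  rw [powNorm, map_prod]
  refine Fintype.prod_equiv (Equiv.addRight 1) _ _ fun k => ?_
  rw [← MulAut.mul_apply, ← map_mul, Equiv.coe_addRight, ZMod.pow_val_add he, ZMod.val_one,
    pow_succ']

lemma powNorm_eq_one {e : E} (he : e ^ p = 1) (hfix : ∀ w, ρ e w = w → w = 1) (w : W) :
    powNorm ρ p e w = 1 :=
  hfix _ (apply_powNorm he w)

/-- When `⟨a, b⟩ ≅ C_p × C_p`, the `p + 1` subgroups `⟨b⟩`, `⟨a * b ^ j⟩` cover each element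
once, except `1`, which they cover `p + 1` times. -/
lemma prod_powNorm_mul_powNorm {a b : E} (hab : Commute a b) (hb : b ^ p = 1) (w : W) :
    (∏ j : ZMod p, powNorm ρ p (a * b ^ j.val) w) * powNorm ρ p b w =
      w ^ p * ∏ i : ZMod p, ρ (a ^ i.val) (powNorm ρ p b w) := by
  set L : ZMod p → W := fun i => ∏ j : ZMod p, ρ (a ^ i.val * b ^ (i * j).val) w
  set R : ZMod p → W := fun i => ∏ j : ZMod p, ρ (a ^ i.val * b ^ j.val) w
  have hL : ∏ j : ZMod p, powNorm ρ p (a * b ^ j.val) w = ∏ i, L i := by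
    rw [Finset.prod_comm]
    refine Finset.prod_congr rfl fun i _ => Finset.prod_congr rfl fun j _ => ?_
    rw [(hab.pow_right _).mul_pow, ← pow_mul, ZMod.pow_val_mul hb, mul_comm]
  have hR : ∏ i : ZMod p, ρ (a ^ i.val) (powNorm ρ p b w) = ∏ i, R i := by
    refine Finset.prod_congr rfl fun i _ => ?_
    simp only [powNorm, map_prod, map_mul, MulAut.mul_apply, R]
  have hL0 : L 0 = w ^ p := by simp [L]
  have hR0 : R 0 = powNorm ρ p b w := by simp [R, powNorm]
  have hLR : ∀ i ≠ 0, L i = R i := fun i hi =>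
    Fintype.prod_equiv (Equiv.mulLeft₀ i hi) _ _ fun _ => rfl
  rw [hL, hR, ← hR0, ← hL0, ← Finset.mul_prod_erase _ L (Finset.mem_univ 0),
    ← Finset.mul_prod_erase _ R (Finset.mem_univ 0),
    Finset.prod_congr rfl fun i hi => hLR i (Finset.ne_of_mem_erase hi), mul_assoc,
    mul_comm (R 0)]

theorem pow_eq_one_of_fixedPointFree [IsMulCommutative E] (hexp : ∀ e : E, e ^ p = 1)
    (hcyc : ¬ IsCyclic E) (hfix : ∀ e ≠ 1, ∀ w, ρ e w = w → w = 1) (w : W) : w ^ p = 1 := by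
  have hgen : ∀ g : E, ∃ x, x ∉ zpowers g := fun g => by
    by_contra! h
    exact hcyc (isCyclic_iff_exists_zpowers_eq_top.mpr ⟨g, eq_top_iff.mpr fun x _ => h x⟩)
  obtain ⟨b, hb⟩ := hgen 1
  obtain ⟨a, ha⟩ := hgen b
  have hb1 : b ≠ 1 := by rintro rfl; exact hb (one_mem _)
  have hab1 : ∀ j : ℕ, a * b ^ j ≠ 1 := fun j h =>
    ha (eq_inv_of_mul_eq_one_left h ▸ inv_mem (pow_mem (mem_zpowers b) j))
  have key := prod_powNorm_mul_powNorm (ρ := ρ) (mul_comm' a b) (hexp b) w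
  rw [Finset.prod_eq_one fun j _ => powNorm_eq_one (hexp _) (hfix _ (hab1 _)) w,
    powNorm_eq_one (hexp b) (hfix b hb1) w] at key
  simpa using key.symm

end FixedPointFree

section OrderPrimeCube

lemma not_isCyclic_quotient_center {P : Type*} [Group P] (hna : ¬ IsMulCommutative P) :
    ¬ IsCyclic (P ⧸ center P) := fun _ =>
  hna (isMulCommutative_of_isCyclic_quotient_center_self P)

variable {p : ℕ} [hp : Fact p.Prime]

lemma pow_eq_one_of_card_eq_prime_sq_of_not_isCyclic {Q : Type*} [Group Q] [Finite Q]
    (hQ : Nat.card Q = p ^ 2) (hcyc : ¬ IsCyclic Q) (u : Q) : u ^ p = 1 := by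
  obtain ⟨k, hk2, hk⟩ := (Nat.dvd_prime_pow hp.out).mp (hQ ▸ orderOf_dvd_natCard u)
  have hk1 : k ≤ 1 := by
    by_contra! h
    exact hcyc (isCyclic_of_orderOf_eq_card u (by rw [hk, hQ, show k = 2 by omega]))
  exact orderOf_dvd_iff_pow_eq_one.mp (hk ▸ (pow_dvd_pow p hk1).trans (pow_one p).dvd)

variable {P : Type*} [Group P] [Finite P]

lemma card_center_eq_prime_of_card_eq_prime_pow_three (hP : Nat.card P = p ^ 3)
    (hna : ¬ IsMulCommutative P) : Nat.card (center P) = p := by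
  have hPZ := card_eq_card_quotient_mul_card_subgroup (center P)
  obtain ⟨k, hk3, hk⟩ := (Nat.dvd_prime_pow hp.out).mp (hP ▸ card_subgroup_dvd_card (center P))
  have : Nontrivial P := Finite.one_lt_card_iff_nontrivial.mp
    (hP ▸ Nat.one_lt_pow three_ne_zero hp.out.one_lt)
  have := (IsPGroup.of_card hP).center_nontrivial
  interval_cases k
  · exact absurd hk (Finite.one_lt_card (α := center P)).ne'
  · simpa using hk
  · rw [hP, hk] at hPZ
    have := isCyclic_of_prime_card (α := P ⧸ center P) (p := p)
      (Nat.eq_of_mul_eq_mul_right (pow_pos hp.out.pos 2) (by rw [← hPZ]; ring))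
    exact (not_isCyclic_quotient_center hna this).elim
  · exact absurd (center_eq_top_iff.mp (eq_top_of_card_eq _ (hk.trans hP.symm))) hna

lemma card_quotient_center_of_card_eq_prime_pow_three (hP : Nat.card P = p ^ 3)
    (hna : ¬ IsMulCommutative P) : Nat.card (P ⧸ center P) = p ^ 2 := by
  have hPZ := card_eq_card_quotient_mul_card_subgroup (center P)
  rw [hP, card_center_eq_prime_of_card_eq_prime_pow_three hP hna] at hPZ
  exact Nat.eq_of_mul_eq_mul_right hp.out.pos (by rw [← hPZ]; ring)

theorem pow_eq_one_of_fixedPointFree_of_card_eq_prime_pow_three {W : Type*} [CommGroup W]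
    (hP : Nat.card P = p ^ 3) (hna : ¬ IsMulCommutative P) (ρ : P →* MulAut W)
    (hZ : center P ≤ ρ.ker) (hfix : ∀ s ∉ center P, ∀ w, ρ s w = w → w = 1) (w : W) :
    w ^ p = 1 := by
  have hQ := card_quotient_center_of_card_eq_prime_pow_three hP hna
  have := IsPGroup.isMulCommutative_of_card_eq_prime_sq hQ
  refine pow_eq_one_of_fixedPointFree
    (pow_eq_one_of_card_eq_prime_sq_of_not_isCyclic hQ (not_isCyclic_quotient_center hna))
    (not_isCyclic_quotient_center hna) (ρ := QuotientGroup.lift _ ρ hZ) ?_ w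
  rintro ⟨s⟩ hs
  exact hfix s fun h => hs ((QuotientGroup.eq_one_iff s).mpr h)

end OrderPrimeCube

section Subgroups

variable {G : Type*} [Group G]

lemma map_subtype_center (H : Subgroup G) :
    (center H).map H.subtype = H ⊓ centralizer (H : Set G) := by
  ext x
  simp [mem_center_iff, mem_centralizer_iff, Subtype.ext_iff, eq_comm, and_comm]

lemma normalizer_le_normalizer_centralizer (Q : Subgroup G) :
    normalizer (Q : Set G) ≤ normalizer (centralizer (Q : Set G) : Set G) := by
  intro g hg h
  simp only [SetLike.mem_coe, mem_centralizer_iff]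
  constructor
  · intro hh y hy
    have := hh _ ((mem_normalizer_iff''.mp hg y).mp hy)
    calc y * (g * h * g⁻¹) = g * ((g⁻¹ * y * g) * h) * g⁻¹ := by group
      _ = g * (h * (g⁻¹ * y * g)) * g⁻¹ := by rw [this]
      _ = g * h * g⁻¹ * y := by group
  · intro hh y hy
    have := hh _ ((mem_normalizer_iff.mp hg y).mp hy)
    calc y * h = g⁻¹ * ((g * y * g⁻¹) * (g * h * g⁻¹)) * g := by group
      _ = g⁻¹ * ((g * h * g⁻¹) * (g * y * g⁻¹)) * g := by rw [this]
      _ = h * y := by group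

lemma isMulCommutative_inf_centralizer (Q : Subgroup G) :
    IsMulCommutative (Q ⊓ centralizer (Q : Set G) : Subgroup G) :=
  le_centralizer_iff_isMulCommutative.mp (inf_le_right.trans (centralizer_le inf_le_left))

lemma inf_centralizer_ne_bot [Finite G] {q : ℕ} [Fact q.Prime] {Q : Subgroup G}
    (hQ : IsPGroup q Q) (hQ1 : Q ≠ ⊥) : Q ⊓ centralizer (Q : Set G) ≠ ⊥ := by
  have : Nontrivial Q := (nontrivial_iff_ne_bot Q).mpr hQ1
  rw [← map_subtype_center, Ne, map_eq_bot_iff_of_injective _ Q.subtype_injective]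
  exact (nontrivial_iff_ne_bot _).mp hQ.center_nontrivial

lemma exists_sylow_le_normalizer_map [Finite G] {p q : ℕ} [Fact p.Prime] [Fact q.Prime]
    {S : Subgroup G} (hS : IsPGroup p S) {N : Subgroup G} [N.Normal] (hN : ¬ p ∣ Nat.card N) :
    ∃ D : Sylow q N, S ≤ normalizer (D.map N.subtype : Set G) := by
  let _ : MulAction S (Sylow q N) :=
    MulAction.compHom _ ((MulAut.conjNormal (H := N)).comp S.subtype)
  obtain ⟨D₀⟩ := (inferInstance : Nonempty (Sylow q N))
  have hcard : ¬ p ∣ Nat.card (Sylow q N) := fun h =>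
    hN (h.trans (D₀.card_dvd_index.trans (index_dvd_card _)))
  obtain ⟨D, hD⟩ := hS.nonempty_fixed_point_of_prime_not_dvd_card _ hcard
  refine ⟨D, fun s hs => mem_normalizer_iff_map_conj_eq.mpr ?_⟩
  have hDs : (D : Subgroup N).map (MulAut.conjNormal s : MulAut N).toMonoidHom = D :=
    Sylow.ext_iff.mp (hD ⟨s, hs⟩)
  rw [map_map, ← congr_arg (map N.subtype) hDs, map_map]
  rfl

lemma exists_isMulCommutative_le_normalizer [Finite G] {p : ℕ} [Fact p.Prime] {S : Subgroup G}
    (hS : IsPGroup p S) {N : Subgroup G} [N.Normal] (hN : ¬ p ∣ Nat.card N) (hN1 : N ≠ ⊥) :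
    ∃ W ≤ N, W ≠ ⊥ ∧ IsMulCommutative W ∧ S ≤ normalizer (W : Set G) := by
  obtain ⟨q, hq, hqN⟩ := Nat.exists_prime_and_dvd (mt card_eq_one.mp hN1)
  have := Fact.mk hq
  obtain ⟨D, hSD⟩ := exists_sylow_le_normalizer_map (q := q) hS hN
  set Q := (D : Subgroup N).map N.subtype
  have hQ1 : Q ≠ ⊥ :=
    (map_eq_bot_iff_of_injective _ N.subtype_injective).not.mpr (D.ne_bot_of_dvd_card hqN)
  refine ⟨Q ⊓ centralizer (Q : Set G), inf_le_left.trans (map_subtype_le _),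
    inf_centralizer_ne_bot (D.2.map _) hQ1, isMulCommutative_inf_centralizer Q, ?_⟩
  exact (le_inf hSD (hSD.trans (normalizer_le_normalizer_centralizer Q))).trans
    inf_normalizer_le_normalizer_inf

variable [Finite G] {p : ℕ} [hp : Fact p.Prime] {S N : Subgroup G}

lemma eq_one_of_commute_of_not_mem_centralizer (hcard : Nat.card S = p ^ 3)
    (hZ : Nat.card (S ⊓ centralizer (S : Set G) : Subgroup G) = p)
    (hV : ∀ V : Subgroup G, V ≤ S → p ^ 2 ≤ Nat.card V → centralizer (V : Set G) ≤ V)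
    (hSN : Disjoint S N) (hZN : S ⊓ centralizer (S : Set G) ≤ centralizer (N : Set G))
    {s x : G} (hs : s ∈ S) (hsZ : s ∉ centralizer (S : Set G)) (hx : x ∈ N)
    (hsx : Commute s x) : x = 1 := by
  set V := S ⊓ centralizer ({x} : Set G)
  have hZV : S ⊓ centralizer (S : Set G) ≤ V := fun z hz =>
    ⟨hz.1, mem_centralizer_singleton_iff.mpr (hZN hz x hx).symm⟩
  have hsV : s ∈ V := ⟨hs, mem_centralizer_singleton_iff.mpr hsx⟩
  have hpV : p < Nat.card V := hZ ▸ lt_of_le_of_ne (card_le_of_le hZV)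
    fun h => hsZ (eq_of_le_of_card_ge hZV h.ge ▸ hsV).2
  obtain ⟨k, -, hk⟩ := (Nat.dvd_prime_pow hp.out).mp (hcard ▸ card_dvd_of_le inf_le_left)
  have hk1 : 1 < k := (Nat.pow_lt_pow_iff_right hp.out.one_lt).mp (by rwa [pow_one, ← hk])
  have hxV : x ∈ V := hV V inf_le_left (hk ▸ Nat.pow_le_pow_right hp.out.pos hk1) fun y hy =>
    mem_centralizer_singleton_iff.mp hy.2
  exact disjoint_def.mp hSN hxV.1 hx

open scoped IsMulCommutative in
lemma eq_bot_of_le_normalizer (hcard : Nat.card S = p ^ 3) (hna : ¬ IsMulCommutative S)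
    (hV : ∀ V : Subgroup G, V ≤ S → p ^ 2 ≤ Nat.card V → centralizer (V : Set G) ≤ V)
    (hSN : Disjoint S N) (hZN : S ⊓ centralizer (S : Set G) ≤ centralizer (N : Set G))
    (hN : (Nat.card N).Coprime p) {W : Subgroup G} [IsMulCommutative W] (hWN : W ≤ N)
    (hSW : S ≤ normalizer (W : Set G)) : W = ⊥ := by
  have hSZ := map_subtype_center S
  have hZcard : Nat.card (S ⊓ centralizer (S : Set G) : Subgroup G) = p := by
    rw [← hSZ, card_map_of_injective S.subtype_injective,
      card_center_eq_prime_of_card_eq_prime_pow_three hcard hna]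
  let ρ : S →* MulAut W := W.normalizerMonoidHom.comp (inclusion hSW)
  have hker : center S ≤ ρ.ker := fun z hz => MonoidHom.mem_ker.mpr <| MulEquiv.ext fun w =>
    Subtype.ext <| by
      show (z : G) * w * (z : G)⁻¹ = w
      rw [← hZN (hSZ ▸ mem_map_of_mem _ hz) w (hWN w.2), mul_inv_cancel_right]
  have hfix : ∀ s ∉ center S, ∀ w, ρ s w = w → w = 1 := fun s hs w hw => by
    have hsZ : (s : G) ∉ centralizer (S : Set G) := fun h =>
      hs ((mem_map_iff_mem S.subtype_injective).mp (hSZ ▸ ⟨s.2, h⟩))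
    exact Subtype.ext <| eq_one_of_commute_of_not_mem_centralizer hcard hZcard hV hSN hZN s.2
      hsZ (hWN w.2) (mul_inv_eq_iff_eq_mul.mp (congrArg Subtype.val hw))
  have hpow := pow_eq_one_of_fixedPointFree_of_card_eq_prime_pow_three hcard hna ρ hker hfix
  refine eq_bot_iff.mpr fun w hw => mem_bot.mpr <| orderOf_eq_one_iff.mp <|
    Nat.eq_one_of_dvd_coprimes hN (Subgroup.orderOf_dvd_natCard N (hWN hw)) ?_
  exact orderOf_dvd_of_pow_eq_one (by simpa using congrArg Subtype.val (hpow ⟨w, hw⟩))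

end Subgroups

/-- Let `M` be a finite group with a nonabelian Sylow `p`-subgroup `S` of order `p^3`
such that `Z(S)` is normal in `M` and `C_M(V) ≤ V` for every subgroup `V ≤ S` of order
at least `p^2`. Then `O_{p'}(M) = 1`, i.e. every normal subgroup of order prime to `p`
is trivial. -/
theorem pPrimeCore_eq_bot
    {M : Type*} [Group M] [Finite M] {p : ℕ} [Fact p.Prime]
    (S : Sylow p M) (hcard : Nat.card ↥(S : Subgroup M) = p ^ 3)
    (hna : ¬ ∀ a b : ↥(S : Subgroup M), a * b = b * a)
    (hZ : ((S : Subgroup M) ⊓ Subgroup.centralizer ((S : Subgroup M) : Set M)).Normal)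
    (hV : ∀ V : Subgroup M, V ≤ S → p ^ 2 ≤ Nat.card ↥V →
      Subgroup.centralizer (V : Set M) ≤ V) :
    ∀ N : Subgroup M, N.Normal → (Nat.card ↥N).Coprime p → N = ⊥ := by
  intro N hN hcop
  have hSN : Disjoint (S : Subgroup M) N :=
    disjoint_of_coprime_natCard (hcard ▸ hcop.symm.pow_left 3)
  have hZN : (S : Subgroup M) ⊓ centralizer ((S : Subgroup M) : Set M) ≤
      centralizer (N : Set M) := fun z hz n hn =>
    (commute_of_normal_of_disjoint _ _ hZ hN (hSN.mono_left inf_le_left) z n hz hn).symm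
  by_contra hN1
  obtain ⟨W, hWN, hW1, hWc, hSW⟩ := exists_isMulCommutative_le_normalizer S.isPGroup'
    ((Nat.Prime.coprime_iff_not_dvd Fact.out).mp hcop.symm) hN1
  exact hW1 (eq_bot_of_le_normalizer hcard (fun _ => hna mul_comm') hV hSN hZN hcop hWN hSW)
end

section
/- Let q be an odd prime power such that every prime divisor of q^2 - 1 is a quadratic residue modulo 7. Then q = 3^(1+6a) for some nonnegative integer a; in particular q ≡ 3 (mod 8). -/
theorem aux_prime_factors_square (n : ℕ)
    (h : ∀ r : ℕ, r.Prime → r ∣ n → IsSquare ((r : ℕ) : ZMod 7)) :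
    IsSquare ((n : ℕ) : ZMod 7) := by
  induction n using Nat.strong_induction_on with
  | _ n ih =>
    match n, ih, h with
    | 0, _, _ => exact ⟨0, by norm_num⟩
    | 1, _, _ => exact ⟨1, by norm_num⟩
    | (n+2), ih, h =>
      set m := n + 2 with hm
      have hm1 : m ≠ 1 := by omega
      have hr : m.minFac.Prime := Nat.minFac_prime hm1
      have hd : m.minFac ∣ m := Nat.minFac_dvd m
      have heq : m = m.minFac * (m / m.minFac) := (Nat.mul_div_cancel' hd).symm
      have hlt : m / m.minFac < m := Nat.div_lt_self (by omega) hr.two_le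
      have h1 : IsSquare ((m.minFac : ℕ) : ZMod 7) := h _ hr hd
      have h2 : IsSquare ((m / m.minFac : ℕ) : ZMod 7) :=
        ih _ hlt (fun r hr' hd' => h r hr' (hd'.trans (Nat.div_dvd_of_dvd hd)))
      rw [heq]
      push_cast
      exact h1.mul h2

/-- Let `q` be an odd prime power such that every prime divisor of `q^2 - 1` is a
quadratic residue modulo `7`. Then `q = 3^(1+6a)` for some `a ≥ 0`; in particular
`q ≡ 3 (mod 8)`. -/
theorem odd_prime_power_of_divisors_squares_mod_seven
    {q p l : ℕ} (hp : p.Prime) (hl : 1 ≤ l) (hq : q = p ^ l) (hodd : Odd q)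
    (h : ∀ r : ℕ, r.Prime → r ∣ q ^ 2 - 1 → ∃ x : ZMod 7, x ^ 2 = (r : ZMod 7)) :
    ∃ a : ℕ, q = 3 ^ (1 + 6 * a) ∧ q % 8 = 3 := by
  have hq1 : 1 ≤ q := by rw [hq]; exact Nat.one_le_pow _ _ hp.pos
  -- Step 1: p = 3
  have hp3 : p = 3 := by
    by_contra hne
    have h3q : ¬ (3 ∣ q) := by
      rw [hq]
      intro hd
      have h3p : 3 ∣ p := Nat.Prime.dvd_of_dvd_pow Nat.prime_three hd
      exact hne ((Nat.prime_dvd_prime_iff_eq Nat.prime_three hp).mp h3p).symm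
    have hdvd : 3 ∣ q ^ 2 - 1 := by
      have hz : (q : ZMod 3) ≠ 0 := by
        rwa [Ne, ZMod.natCast_eq_zero_iff]
      have h0 : ((q : ZMod 3)) ^ 2 - 1 = 0 := by
        revert hz; generalize (q : ZMod 3) = z; revert z; decide
      have hc : ((q ^ 2 - 1 : ℕ) : ZMod 3) = 0 := by
        rw [Nat.cast_sub (by nlinarith)]
        push_cast
        exact h0
      rwa [ZMod.natCast_eq_zero_iff] at hc
    obtain ⟨x, hx⟩ := h 3 Nat.prime_three hdvd
    exact absurd hx (by revert x; decide)
  subst hp3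
  -- Step 2: l is odd
  have hlodd : l % 2 = 1 := by
    rcases Nat.even_or_odd l with he | ho
    · exfalso
      obtain ⟨m, hm⟩ := he
      have h81 : q ^ 2 = 81 ^ m := by
        rw [hq, ← pow_mul, show l * 2 = 4 * m from by omega, pow_mul]
        norm_num
      have hd5 : (5 : ℕ) ∣ q ^ 2 - 1 := by
        have := Nat.sub_dvd_pow_sub_pow 81 1 m
        simp only [one_pow] at this
        rw [h81]
        exact dvd_trans (by norm_num) this
      obtain ⟨x, hx⟩ := h 5 (by norm_num) hd5
      exact absurd hx (by revert x; decide)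
    · exact Nat.odd_iff.mp ho
  -- factorization of q^2 - 1
  have hfac : q ^ 2 - 1 = (q - 1) * (q + 1) := by
    have e : q ^ 2 = (q - 1) * (q + 1) + 1 := by
      obtain ⟨t, rfl⟩ := Nat.exists_eq_add_of_le hq1
      simp only [Nat.add_sub_cancel_left]
      ring
    omega
  have hdm : (q - 1) ∣ q ^ 2 - 1 := ⟨q + 1, hfac⟩
  have hdp : (q + 1) ∣ q ^ 2 - 1 := ⟨q - 1, by rw [hfac, mul_comm]⟩
  have key : ∀ n : ℕ, n ∣ q ^ 2 - 1 → IsSquare ((n : ℕ) : ZMod 7) := by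
    intro n hn
    apply aux_prime_factors_square
    intro r hr hd
    obtain ⟨x, hx⟩ := h r hr (hd.trans hn)
    exact ⟨x, by rw [← hx]; ring⟩
  have hsm : IsSquare (((q - 1 : ℕ)) : ZMod 7) := key _ hdm
  have hsp : IsSquare (((q + 1 : ℕ)) : ZMod 7) := key _ hdp
  -- compute q mod 7
  have hq7 : (q : ZMod 7) = 3 ^ (l % 6) := by
    obtain ⟨k, hk⟩ : ∃ k, l = 6 * k + l % 6 := ⟨l / 6, by omega⟩
    rw [hq]
    push_cast
    conv_lhs => rw [hk]
    rw [pow_add, pow_mul, show (3 : ZMod 7) ^ 6 = 1 from by decide, one_pow, one_mul]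
  have hcm : ((q - 1 : ℕ) : ZMod 7) = (q : ZMod 7) - 1 := by
    rw [Nat.cast_sub hq1]; push_cast; ring
  have hcp : ((q + 1 : ℕ) : ZMod 7) = (q : ZMod 7) + 1 := by push_cast; ring
  have hl6 : l % 6 = 1 ∨ l % 6 = 3 ∨ l % 6 = 5 := by omega
  rcases hl6 with h1 | h3 | h5
  · -- l % 6 = 1 : conclude
    refine ⟨l / 6, ?_, ?_⟩
    · rw [hq]; congr 1; omega
    · obtain ⟨k, hk⟩ : ∃ k, l = 2 * k + 1 := ⟨l / 2, by omega⟩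
      rw [hq, hk, pow_succ, pow_mul]
      rw [Nat.mul_mod, Nat.pow_mod]
      norm_num
  · exfalso
    rw [hcm, hq7, h3] at hsm
    exact absurd hsm (by decide)
  · exfalso
    rw [hcp, hq7, h5] at hsp
    exact absurd hsp (by decide)
end
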